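/- Let n ≥ 2, m ≥ 1, q ∈ [1,∞) and r > 0. Let f ∈ L^q(B_r(0); ℝ^m) satisfy f(x′, x_n) = f(x′, −x_n) for a.e. (x′, x_n) ∈ B_r(0) (f is even in the last coordinate). Then (⨍_{B_r(0)} |f − ⟨f⟩_{B_r(0)}|^q dx)^{1/q} ≤ 2 (⨍_{B_r^+(0)} |f − ⟨f⟩_{B_r^+(0)}|^q dx)^{1/q} and (⨍_{B_r^+(0)} |f − ⟨f⟩_{B_r^+(0)}|^q dx)^{1/q} ≤ 2 (⨍_{B_r(0)} |f − ⟨f⟩_{B_r(0)}|^q dx)^{1/q}. -/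

import Mathlib

open MeasureTheory Metric

/-- Reflection of a point of `ℝⁿ` in its last coordinate. -/
noncomputable def reflectLast (n : ℕ) (x : EuclideanSpace ℝ (Fin n)) :
    EuclideanSpace ℝ (Fin n) :=
  WithLp.toLp 2 (fun i : Fin n => if (i : ℕ) = n - 1 then -(x i) else x i)

/-- The open upper half-ball `B_r^+(0) = {x ∈ B_r(0) : x_n > 0}` in `ℝⁿ`. -/
noncomputable def upperHalfBall (n : ℕ) (hn : 0 < n) (r : ℝ) :
    Set (EuclideanSpace ℝ (Fin n)) :=
  {x | x ∈ Metric.ball 0 r ∧ 0 < x ⟨n - 1, Nat.sub_lt hn one_pos⟩}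

/-
Reflection in the last coordinate is a measure-preserving isometry mapping the lower half-ball
onto `B_r^+(0)`, and the hyperplane `x_n = 0` is null. Hence an even function has the same
average over `B_r(0)` as over `B_r^+(0)`. Applied first to `f` and then to `|f - ⟨f⟩|^q`, this
shows that the two mean oscillations are equal, so each is at most twice the other.
-/

section ReflectionInvariant

variable {α E : Type*} [MeasurableSpace α] [NormedAddCommGroup E] [NormedSpace ℝ E]
  {μ : Measure α} {σ : α → α} {s t u : Set α} {g : α → E}

theorem setAverage_eq_of_union_preimage_ae_eq (hσ : MeasurePreserving σ μ μ)
    (hσe : MeasurableEmbedding σ) (ht : MeasurableSet t) (hst : Disjoint s t)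
    (hpre : σ ⁻¹' t = s) (hu : (s ∪ t : Set α) =ᵐ[μ] u) (hg : IntegrableOn g u μ)
    (hgσ : ∀ᵐ x ∂μ.restrict s, g (σ x) = g x) :
    ⨍ x in u, g x ∂μ = ⨍ x in s, g x ∂μ := by
  have hst_int : IntegrableOn g (s ∪ t) μ := hg.congr_set_ae hu
  have hμ : μ u = 2 * μ s := by
    rw [← measure_congr hu, measure_union hst ht, two_mul, ← hpre,
      hσ.measure_preimage_emb hσe]
  have hint : ∫ x in u, g x ∂μ = (2 : ℝ) • ∫ x in s, g x ∂μ := by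
    have hts : ∫ x in t, g x ∂μ = ∫ x in s, g x ∂μ := by
      rw [← hσ.setIntegral_preimage_emb hσe g t, hpre]
      exact integral_congr_ae hgσ
    rw [← setIntegral_congr_set hu, setIntegral_union hst ht hst_int.left_of_union
      hst_int.right_of_union, hts, two_smul]
  rw [setAverage_eq, setAverage_eq, measureReal_def, measureReal_def, hμ, hint, smul_smul,
    ENNReal.toReal_mul, ENNReal.toReal_ofNat, mul_inv_rev, inv_mul_cancel_right₀ two_ne_zero]

end ReflectionInvariant

noncomputable def reflectLastₗᵢ (n : ℕ) :
    EuclideanSpace ℝ (Fin n) ≃ₗᵢ[ℝ] EuclideanSpace ℝ (Fin n) :=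
  .piLpCongrRight 2 fun i =>
    if (i : ℕ) = n - 1 then LinearIsometryEquiv.neg ℝ else LinearIsometryEquiv.refl ℝ ℝ

theorem coe_reflectLastₗᵢ (n : ℕ) : ⇑(reflectLastₗᵢ n) = reflectLast n := by
  ext x i
  simp only [reflectLastₗᵢ, reflectLast, LinearIsometryEquiv.piLpCongrRight_apply,
    PiLp.toLp_apply]
  split_ifs <;> rfl

theorem reflectLast_reflectLast (n : ℕ) (x : EuclideanSpace ℝ (Fin n)) :
    reflectLast n (reflectLast n x) = x := by
  ext i
  simp only [reflectLast, PiLp.toLp_apply]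
  split_ifs <;> simp

theorem volume_setOf_apply_eq_zero {ι : Type*} [Fintype ι] (i : ι) :
    volume {x : EuclideanSpace ℝ ι | x i = 0} = 0 := by
  have hker : LinearMap.ker (EuclideanSpace.projₗ (𝕜 := ℝ) i) ≠ ⊤ := fun h => by
    classical
    simpa using LinearMap.congr_fun (LinearMap.ker_eq_top.mp h) (EuclideanSpace.single i 1)
  exact Measure.addHaar_submodule volume _ hker

section HalfBall

variable {n : ℕ} (hn : 0 < n) (r : ℝ)

theorem isOpen_upperHalfBall : IsOpen (upperHalfBall n hn r) :=
  isOpen_ball.inter (isOpen_lt continuous_const (EuclideanSpace.proj _).continuous)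

theorem mem_reflectLast_preimage_upperHalfBall {x : EuclideanSpace ℝ (Fin n)} :
    x ∈ reflectLast n ⁻¹' upperHalfBall n hn r ↔
      x ∈ ball 0 r ∧ x ⟨n - 1, Nat.sub_lt hn one_pos⟩ < 0 := by
  simp only [Set.mem_preimage, upperHalfBall, Set.mem_ofPred_eq, mem_ball_zero_iff,
    ← coe_reflectLastₗᵢ, LinearIsometryEquiv.norm_map]
  simp [coe_reflectLastₗᵢ, reflectLast]

theorem upperHalfBall_union_ae_eq_ball :
    (upperHalfBall n hn r ∪ reflectLast n ⁻¹' upperHalfBall n hn r : Set _) =ᵐ[volume]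
      ball (0 : EuclideanSpace ℝ (Fin n)) r := by
  refine ae_eq_set.2 ⟨?_, measure_mono_null ?_
    (volume_setOf_apply_eq_zero ⟨n - 1, Nat.sub_lt hn one_pos⟩)⟩
  · rw [Set.sdiff_eq_empty.2 (Set.union_subset (fun x hx => hx.1)
      fun x hx => ((mem_reflectLast_preimage_upperHalfBall hn r).1 hx).1), measure_empty]
  · rintro x ⟨hx, hx'⟩
    rw [Set.mem_union, mem_reflectLast_preimage_upperHalfBall] at hx'
    simp only [upperHalfBall, Set.mem_ofPred_eq] at hx'
    exact le_antisymm (not_lt.1 fun h => hx' (.inl ⟨hx, h⟩))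
      (not_lt.1 fun h => hx' (.inr ⟨hx, h⟩))

theorem setAverage_ball_eq_setAverage_upperHalfBall {F : Type*} [NormedAddCommGroup F]
    [NormedSpace ℝ F] {g : EuclideanSpace ℝ (Fin n) → F} (hg : IntegrableOn g (ball 0 r))
    (hge : ∀ᵐ x ∂volume.restrict (ball 0 r), g (reflectLast n x) = g x) :
    ⨍ x in ball 0 r, g x = ⨍ x in upperHalfBall n hn r, g x := by
  have hσ : MeasurePreserving (reflectLast n) :=
    coe_reflectLastₗᵢ n ▸ (reflectLastₗᵢ n).measurePreserving
  have hσe : MeasurableEmbedding (reflectLast n) :=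
    coe_reflectLastₗᵢ n ▸ (reflectLastₗᵢ n).toHomeomorph.measurableEmbedding
  refine setAverage_eq_of_union_preimage_ae_eq hσ hσe
    ((isOpen_upperHalfBall hn r).measurableSet.preimage hσe.measurable) ?_ ?_
    (upperHalfBall_union_ae_eq_ball hn r) hg
    (ae_restrict_of_ae_restrict_of_subset (fun x hx => hx.1) hge)
  · refine Set.disjoint_left.2 fun x hx hx' => ?_
    exact ((mem_reflectLast_preimage_upperHalfBall hn r).1 hx').2.not_gt hx.2
  · ext x
    simp [reflectLast_reflectLast]

theorem setAverage_norm_sub_rpow_ball_eq_upperHalfBall {F : Type*} [NormedAddCommGroup F]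
    [NormedSpace ℝ F] {f : EuclideanSpace ℝ (Fin n) → F} {q : ℝ} (hq : 1 ≤ q)
    (hf : MemLp f (ENNReal.ofReal q) (volume.restrict (ball 0 r)))
    (heven : ∀ᵐ x ∂volume.restrict (ball 0 r), f (reflectLast n x) = f x) :
    ⨍ x in ball 0 r, ‖f x - ⨍ y in ball 0 r, f y‖ ^ q =
      ⨍ x in upperHalfBall n hn r, ‖f x - ⨍ y in upperHalfBall n hn r, f y‖ ^ q := by
  have : IsFiniteMeasure (volume.restrict (ball (0 : EuclideanSpace ℝ (Fin n)) r)) :=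
    isFiniteMeasure_restrict.2 measure_ball_lt_top.ne
  have hmean : ⨍ y in ball 0 r, f y = ⨍ y in upperHalfBall n hn r, f y :=
    setAverage_ball_eq_setAverage_upperHalfBall hn r
      (hf.integrable (ENNReal.one_le_ofReal.2 hq)) heven
  rw [← hmean]
  refine setAverage_ball_eq_setAverage_upperHalfBall hn r ?_ ?_
  · have h := (hf.sub (memLp_const (⨍ y in ball 0 r, f y))).integrable_norm_rpow
      (ENNReal.ofReal_pos.2 (zero_lt_one.trans_le hq)).ne' ENNReal.ofReal_ne_top
    rwa [ENNReal.toReal_ofReal (zero_le_one.trans hq)] at h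
  · filter_upwards [heven] with x hx
    rw [hx]

end HalfBall

theorem stmt1 (n m : ℕ) (hn : 2 ≤ n) (q : ℝ) (hq : 1 ≤ q)
    (r : ℝ)
    (f : EuclideanSpace ℝ (Fin n) → EuclideanSpace ℝ (Fin m))
    (hf : MemLp f (ENNReal.ofReal q)
      (volume.restrict (ball (0 : EuclideanSpace ℝ (Fin n)) r)))
    (heven : ∀ᵐ x ∂(volume.restrict (ball (0 : EuclideanSpace ℝ (Fin n)) r)),
      f (reflectLast n x) = f x) :
    (⨍ x in ball (0 : EuclideanSpace ℝ (Fin n)) r,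
        ‖f x - ⨍ y in ball (0 : EuclideanSpace ℝ (Fin n)) r, f y‖ ^ q) ^ (1 / q)
      ≤ 2 * (⨍ x in upperHalfBall n (by omega) r,
          ‖f x - ⨍ y in upperHalfBall n (by omega) r, f y‖ ^ q) ^ (1 / q)
    ∧
    (⨍ x in upperHalfBall n (by omega) r,
        ‖f x - ⨍ y in upperHalfBall n (by omega) r, f y‖ ^ q) ^ (1 / q)
      ≤ 2 * (⨍ x in ball (0 : EuclideanSpace ℝ (Fin n)) r,
          ‖f x - ⨍ y in ball (0 : EuclideanSpace ℝ (Fin n)) r, f y‖ ^ q) ^ (1 / q) := by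
  rw [setAverage_norm_sub_rpow_ball_eq_upperHalfBall (by omega) r hq hf heven]
  have hnonneg : 0 ≤ (⨍ x in upperHalfBall n (by omega) r,
      ‖f x - ⨍ y in upperHalfBall n (by omega) r, f y‖ ^ q) ^ (1 / q) :=
    Real.rpow_nonneg (by
      rw [setAverage_eq]
      exact smul_nonneg (by positivity) (integral_nonneg fun x => by positivity)) _
  exact ⟨le_mul_of_one_le_left hnonneg one_le_two, le_mul_of_one_le_left hnonneg one_le_two⟩
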